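/- arXiv:1407.0548 — 2 statements merged into one kernel-verified Lean document; each statement's English description precedes it below -/
import Mathlib

section
/- Let G be a finite abelian group with |G| ≥ 3 and let U be a minimal zero-sum sequence over G of length equal to the Davenport constant D(G). If g₁, g₂ are elements of the support of U, then g₁ ≠ 2g₂. -/
open Multiset

/-- A minimal zero-sum sequence over `G`: a nonempty zero-sum sequence with no
proper nonempty zero-sum subsequence. -/
def IsMinZeroSum {G : Type*} [AddCommGroup G] (S : Multiset G) : Prop :=
  S ≠ 0 ∧ S.sum = 0 ∧ ∀ T : Multiset G, T ≤ S → T ≠ 0 → T ≠ S → T.sum ≠ 0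

/-- The Davenport constant of `G`: the maximal length of a minimal zero-sum
sequence over `G`. -/
noncomputable def DavenportConstant (G : Type*) [AddCommGroup G] : ℕ :=
  sSup {n : ℕ | ∃ S : Multiset G, IsMinZeroSum S ∧ Multiset.card S = n}

/-- The set of lengths of a zero-sum sequence `A`: the set of all `k` such that
`A` can be written as a product of `k` minimal zero-sum sequences. -/
def LengthsSet {G : Type*} [AddCommGroup G] (A : Multiset G) : Set ℕ :=
  {k : ℕ | ∃ f : Multiset (Multiset G), Multiset.card f = k ∧
    (∀ S ∈ f, IsMinZeroSum S) ∧ f.sum = A}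

/-- A factorization of a zero-sum sequence `A` into minimal zero-sum sequences. -/
def IsFactorization {G : Type*} [AddCommGroup G] (A : Multiset G)
    (z : Multiset (Multiset G)) : Prop :=
  (∀ S ∈ z, IsMinZeroSum S) ∧ z.sum = A

/-- The distance between two factorizations. -/
def factDist {G : Type*} [AddCommGroup G] [DecidableEq G]
    (z z' : Multiset (Multiset G)) : ℕ :=
  max (Multiset.card (z - z')) (Multiset.card (z' - z))

/-- The catenary degree of the monoid of zero-sum sequences over `G`: the smallest
`N` such that any two factorizations of an element can be connected by a chain of
factorizations in which consecutive members have distance at most `N`. -/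
noncomputable def CatenaryDegree (G : Type*) [AddCommGroup G] [DecidableEq G] : ℕ :=
  sInf {N : ℕ | ∀ (A : Multiset G) (z z' : Multiset (Multiset G)),
    IsFactorization A z → IsFactorization A z' →
    Relation.ReflTransGen (fun x y => IsFactorization A y ∧ factDist x y ≤ N) z z'}

/-- The invariant `ℸ(G) = sup { min (L \ {2}) : 2 ∈ L ∈ 𝓛(G) }`. -/
noncomputable def Daleth (G : Type*) [AddCommGroup G] : ℕ :=
  sSup {m : ℕ | ∃ A : Multiset G, A.sum = 0 ∧ 2 ∈ LengthsSet A ∧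
    (LengthsSet A \ {2}).Nonempty ∧ m = sInf (LengthsSet A \ {2})}

/-! If `U` is a minimal zero-sum sequence of maximal length containing both `g` and `2g`, then
replacing the term `2g` by two copies of `g` gives a zero-sum sequence that is still minimal: a
zero-sum subsequence using both new copies of `g` folds back into a zero-sum subsequence of `U`
through `2g`, and one using at most one copy is already a proper subsequence of `U`. This
minimal sequence is longer than `U`, contradicting the maximality of `|U| = D(G)`. -/

section MinZeroSum

variable {G : Type*} [AddCommGroup G]

theorem IsMinZeroSum.eq_of_le {S T : Multiset G} (hS : IsMinZeroSum S) (hTS : T ≤ S)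
    (hT : T ≠ 0) (hsum : T.sum = 0) : T = S := by
  by_contra hne
  exact hS.2.2 T hTS hT hne hsum

theorem isMinZeroSum_replicate_addOrderOf {g : G} (hg : 0 < addOrderOf g) :
    IsMinZeroSum (replicate (addOrderOf g) g) := by
  refine ⟨fun h => hg.ne' (by simpa using congrArg card h), by simp [addOrderOf_nsmul_eq_zero], ?_⟩
  intro T hT hT0 hTS
  obtain ⟨k, hk, rfl⟩ := le_replicate_iff.mp hT
  have hk0 : k ≠ 0 := by rintro rfl; exact hT0 (replicate_zero g)
  have hklt : k < addOrderOf g := lt_of_le_of_ne hk (by rintro rfl; exact hTS rfl)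
  simpa using nsmul_ne_zero_of_lt_addOrderOf hk0 hklt

theorem IsMinZeroSum.count_le_addOrderOf [DecidableEq G] {S : Multiset G}
    (hS : IsMinZeroSum S) {g : G} (hg : 0 < addOrderOf g) : S.count g ≤ addOrderOf g := by
  by_contra! hlt
  have hrep : replicate (addOrderOf g) g = S :=
    hS.eq_of_le (le_count_iff_replicate_le.mp hlt.le) (isMinZeroSum_replicate_addOrderOf hg).1
      (isMinZeroSum_replicate_addOrderOf hg).2.1
  rw [← hrep, count_replicate_self] at hlt
  exact hlt.false

theorem IsMinZeroSum.zero_notMem_of_two_le_card {S : Multiset G} (hS : IsMinZeroSum S)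
    (hcard : 2 ≤ card S) : (0 : G) ∉ S := by
  intro h0
  have : {0} = S := hS.eq_of_le (singleton_le.mpr h0) (singleton_ne_zero 0) (sum_singleton 0)
  simp [← this] at hcard

theorem IsMinZeroSum.split_two_nsmul {g : G} {W : Multiset G}
    (hU : IsMinZeroSum (2 • g ::ₘ W)) (hgW : g ∈ W) :
    IsMinZeroSum (replicate 2 g + W) := by
  classical
  have hsum : (replicate 2 g + W).sum = 0 := by
    rw [sum_add, sum_replicate, ← sum_cons]; exact hU.2.1
  refine ⟨by simp, hsum, fun T hT hT0 hTU hTsum => ?_⟩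
  by_cases hgg : replicate 2 g ≤ T
  · obtain ⟨X, rfl⟩ := _root_.le_iff_exists_add.mp hgg
    have hXW : X ≤ W := (add_le_add_iff_left _).mp hT
    have hfold : 2 • g ::ₘ X = 2 • g ::ₘ W :=
      hU.eq_of_le ((cons_le_cons_iff _).mpr hXW) cons_ne_zero
        (by rw [sum_cons, ← sum_replicate, ← sum_add]; exact hTsum)
    exact hTU (by rw [(cons_inj_right _).mp hfold])
  · have hTW : T ≤ W := by
      rw [le_iff_count]
      intro a
      have hTa := le_iff_count.mp hT a
      have hgT : T.count g < 2 := by rwa [← not_le, le_count_iff_replicate_le]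
      have hgW' : 0 < W.count g := count_pos.mpr hgW
      rw [count_add, count_replicate] at hTa
      split_ifs at hTa with ha
      · subst ha; omega
      · omega
    have hTU' : T ≠ 2 • g ::ₘ W := fun h => by
      simpa [h] using card_le_card hTW
    exact hU.2.2 T (hTW.trans (le_cons_self W _)) hT0 hTU' hTsum

end MinZeroSum

section Davenport

variable {G : Type*} [AddCommGroup G] [Finite G]

theorem bddAbove_card_isMinZeroSum :
    BddAbove {n : ℕ | ∃ S : Multiset G, IsMinZeroSum S ∧ card S = n} := by
  classical
  have := Fintype.ofFinite G
  refine ⟨∑ g : G, addOrderOf g, ?_⟩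
  rintro _ ⟨S, hS, rfl⟩
  calc card S = ∑ g, S.count g := (sum_count_eq_card fun g _ => Finset.mem_univ g).symm
    _ ≤ ∑ g, addOrderOf g :=
      Finset.sum_le_sum fun g _ => hS.count_le_addOrderOf (addOrderOf_pos g)

theorem IsMinZeroSum.card_le_davenportConstant {S : Multiset G} (hS : IsMinZeroSum S) :
    card S ≤ DavenportConstant G :=
  le_csSup bddAbove_card_isMinZeroSum ⟨S, hS, rfl⟩

theorem two_le_davenportConstant [Nontrivial G] : 2 ≤ DavenportConstant G := by
  obtain ⟨g, hg⟩ := exists_ne (0 : G)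
  have hpos : 0 < addOrderOf g := addOrderOf_pos g
  have hne_one : addOrderOf g ≠ 1 := mt AddMonoid.addOrderOf_eq_one_iff.mp hg
  have := (isMinZeroSum_replicate_addOrderOf hpos).card_le_davenportConstant
  rw [card_replicate] at this
  omega

end Davenport

theorem statement0 {G : Type*} [AddCommGroup G] [Fintype G]
    (hG : 3 ≤ Fintype.card G) (U : Multiset G) (hU : IsMinZeroSum U)
    (hcard : Multiset.card U = DavenportConstant G)
    (g₁ g₂ : G) (h1 : g₁ ∈ U) (h2 : g₂ ∈ U) :
    g₁ ≠ 2 • g₂ := by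
  classical
  rintro rfl
  have : Nontrivial G := Fintype.one_lt_card_iff_nontrivial.mp (by omega)
  have hlong : 2 ≤ card U := hcard ▸ two_le_davenportConstant
  have hg₂ : g₂ ≠ 0 := by
    rintro rfl
    exact hU.zero_notMem_of_two_le_card hlong h2
  have hne : g₂ ≠ 2 • g₂ := by simpa [two_nsmul] using hg₂
  have hUsplit : 2 • g₂ ::ₘ U.erase (2 • g₂) = U := cons_erase h1
  have hsplit := (hUsplit ▸ hU).split_two_nsmul (mem_erase_of_ne hne |>.mpr h2)
  have hlonger := hsplit.card_le_davenportConstant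
  rw [card_add, card_replicate, card_erase_of_mem h1, Nat.pred_eq_sub_one, hcard] at hlonger
  omega
end

section
/- Let G be an abelian group with |G| ≥ 3 and let U, V be minimal zero-sum sequences over G with max L(UV) ≥ 3. If for some g ∈ G there is no factorization of UV into k minimal zero-sum sequences with 3 ≤ k ≤ ord(g), then v_g(U) + v_{-g}(V) ≤ ord(g). -/
open Multiset

/-!
Write `n = ord g`, `a = v_g(U)`, `b = v_{-g}(V)` and suppose `a + b > n`. For `n = 1` both `U` and
`V` are the sequence `0`, so `UV` has length 2 only. For `n ≥ 2` write `U = g^a S`, `V = (-g)^b T`;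
unless `U` or `V` is `g(-g)`, the element `-g` does not occur in `S` and `g` does not occur in `T`,
and with `s = a + b - n ≥ 1`
  `UV = (g(-g))^s · S(-g)^{n-a} · T g^{n-b}`.
Every atom dividing `S(-g)^{n-a}` contains `-g`, since otherwise it would be a proper zero-sum
subsequence of `U`; so this part has at most `n - a` factors, and symmetrically for the last part.
This yields a factorization of `UV` of length at most `n` having `g(-g)` as a factor; if its length
is at most 2, then `UV = g(-g) · A` with `A` an atom, as is trivially the case when `U` or `V` is
`g(-g)`. Such a sequence has no factorization of length at least 3: the factor `W` containing `-g`
is either `g(-g)`, leaving the atom `A`, or together with a factor `W'` containing `g` it gives the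
nonempty proper zero-sum subsequence `W (-g)^{-1} · W' g^{-1}` of `A`.
-/

theorem Multiset.card_le_addMonoidHom_sum {M : Type*} [AddCommMonoid M] (φ : M →+ ℕ)
    {z : Multiset M} (h : ∀ x ∈ z, 1 ≤ φ x) : card z ≤ φ z.sum := by
  rw [map_multiset_sum]
  simpa using card_nsmul_le_sum (s := z.map φ) (a := 1) (by simpa using h)

section

variable {G : Type*} [AddCommGroup G]

namespace IsMinZeroSum

variable {A T U V : Multiset G}

theorem eq_of_le_s3 (hU : IsMinZeroSum U) (hTU : T ≤ U) (hT : T ≠ 0) (hTs : T.sum = 0) : T = U := by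
  by_contra hne
  exact hU.2.2 T hTU hT hne hTs

theorem right_eq_zero_of_add_eq (hA : IsMinZeroSum A) {C D : Multiset G} (h : C + D = A)
    (hC : C ≠ 0) (hCs : C.sum = 0) : D = 0 := by
  have hCA := hA.eq_of_le_s3 (h ▸ le_add_right le_rfl) hC hCs
  rwa [hCA, add_eq_left] at h

theorem not_add (hU : IsMinZeroSum U) (hV : IsMinZeroSum V) : ¬ IsMinZeroSum (U + V) :=
  fun h => hV.1 (h.right_eq_zero_of_add_eq rfl hU.1 hU.2.1)

theorem eq_singleton_zero (hU : IsMinZeroSum U) (h : (0 : G) ∈ U) : U = {0} :=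
  (hU.eq_of_le_s3 (singleton_le.mpr h) (singleton_ne_zero 0) (sum_singleton 0)).symm

theorem eq_pair {x y : G} (hU : IsMinZeroSum U) (hx : x ∈ U) (hy : y ∈ U) (hxy : x ≠ y)
    (hsum : x + y = 0) : U = {x, y} := by
  refine (hU.eq_of_le_s3 ?_ (by simp) (by simpa using hsum)).symm
  rw [le_iff_subset (by simpa using hxy)]
  simp [insert_eq_cons, cons_subset, hx, hy]

end IsMinZeroSum

theorem isMinZeroSum_pair {g : G} (hg : g ≠ 0) :
    IsMinZeroSum ({g, -g} : Multiset G) := by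
  refine ⟨by simp, by simp, fun T hT hT0 hTne hTs => ?_⟩
  have hcard : card T = 1 := by
    have := card_lt_card (lt_of_le_of_ne hT hTne)
    have := card_pos.mpr hT0
    simp_all; omega
  obtain ⟨x, rfl⟩ := card_eq_one.mp hcard
  have hx : x = g ∨ x = -g := by simpa using singleton_le.mp hT
  rcases hx with rfl | rfl <;> simp_all

namespace IsFactorization

variable {A B : Multiset G} {z w : Multiset (Multiset G)}

theorem add (hz : IsFactorization A z) (hw : IsFactorization B w) :
    IsFactorization (A + B) (z + w) :=
  ⟨fun W hW => (mem_add.mp hW).elim (hz.1 W) (hw.1 W), by rw [sum_add, hz.2, hw.2]⟩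

theorem eq_zero (hz : IsFactorization 0 z) : z = 0 :=
  eq_zero_of_forall_notMem fun W hW => (hz.1 W hW).1 (sum_eq_zero_iff.mp hz.2 W hW)

theorem card_le_card (hz : IsFactorization A z) : card z ≤ card A :=
  hz.2 ▸ card_le_addMonoidHom_sum cardHom fun W hW => card_pos.mpr (hz.1 W hW).1

end IsFactorization

theorem exists_isFactorization {A : Multiset G} (hA : A.sum = 0) : ∃ z, IsFactorization A z := by
  induction A using Multiset.strongInductionOn with
  | ih A ih =>
    by_cases hmin : IsMinZeroSum A
    · exact ⟨{A}, by simp [IsFactorization, hmin]⟩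
    by_cases hA0 : A = 0
    · exact ⟨0, by simp [IsFactorization, hA0]⟩
    obtain ⟨T, hTA, hT0, hTA', hTs⟩ : ∃ T ≤ A, T ≠ 0 ∧ T ≠ A ∧ T.sum = 0 := by
      simpa [IsMinZeroSum, hA0, hA] using hmin
    obtain ⟨D, rfl⟩ := exists_add_of_le hTA
    obtain ⟨z₁, hz₁⟩ := ih T (lt_of_le_of_ne hTA hTA') hTs
    obtain ⟨z₂, hz₂⟩ := ih D (lt_add_of_pos_left _ (pos_iff_ne_zero.mpr hT0))
      (by simpa [hTs] using hA)
    exact ⟨z₁ + z₂, hz₁.add hz₂⟩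

theorem card_le_two_of_isFactorization_pair_add {g : G} (hg : g ≠ 0) {A : Multiset G}
    (hA : IsMinZeroSum A) {z : Multiset (Multiset G)} (hz : IsFactorization ({g, -g} + A) z) :
    card z ≤ 2 := by
  by_contra! h3
  obtain ⟨W₀, hW₀, hgW₀⟩ : ∃ W₀ ∈ z, -g ∈ W₀ := mem_join.mp (by simp [join, hz.2])
  obtain ⟨z', rfl⟩ := exists_cons_of_mem hW₀
  obtain ⟨T₀, rfl⟩ := exists_cons_of_mem hgW₀
  have hW₀min := hz.1 _ (mem_cons_self _ _)
  have hT₀ : T₀.sum = g := by simpa [neg_add_eq_zero, eq_comm] using hW₀min.2.1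
  have hsum : T₀ + z'.sum = g ::ₘ A := by simpa [insert_eq_cons, cons_swap g] using hz.2
  suffices ∃ C W z'', z' = W ::ₘ z'' ∧ C + z''.sum = A ∧ C ≠ 0 ∧ C.sum = 0 by
    obtain ⟨C, W, z'', rfl, hA', hC, hCs⟩ := this
    have := IsFactorization.eq_zero
      ⟨fun W hW => hz.1 W (by simp [hW]), hA.right_eq_zero_of_add_eq hA' hC hCs⟩
    simp [this] at h3
  by_cases hgT₀ : g ∈ T₀
  · obtain ⟨T₁, rfl⟩ := exists_cons_of_mem hgT₀
    have hT₁ : T₁ = 0 :=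
      hW₀min.right_eq_zero_of_add_eq (C := {-g, g}) (by simp) (by simp) (by simp)
    subst hT₁
    obtain ⟨W, hW⟩ := exists_mem_of_ne_zero (s := z') (by rintro rfl; simp at h3)
    obtain ⟨z'', rfl⟩ := exists_cons_of_mem hW
    have hWmin := hz.1 W (by simp)
    exact ⟨W, W, z'', rfl, by simpa using hsum, hWmin.1, hWmin.2.1⟩
  · have hgz' : g ∈ z'.sum := by
      have : g ∈ T₀ + z'.sum := hsum ▸ mem_cons_self g A
      simpa [hgT₀] using this
    obtain ⟨W, hW, hgW⟩ := mem_join.mp hgz'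
    obtain ⟨z'', rfl⟩ := exists_cons_of_mem hW
    obtain ⟨T₁, rfl⟩ := exists_cons_of_mem hgW
    have hT₁ : T₁.sum = -g := by
      simpa [add_eq_zero_iff_eq_neg'] using (hz.1 (g ::ₘ T₁) (by simp)).2.1
    refine ⟨T₀ + T₁, _, z'', rfl, ?_, ?_, by simp [hT₀, hT₁]⟩
    · simpa [add_assoc] using hsum
    · intro h
      rw [(add_eq_zero.mp h).1, sum_zero] at hT₀
      exact hg hT₀.symm

variable [DecidableEq G]

theorem IsMinZeroSum.count_le_addOrderOf_s3 {U : Multiset G} (hU : IsMinZeroSum U) (g : G)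
    (hn : 0 < addOrderOf g) : count g U ≤ addOrderOf g := by
  by_contra! h
  have hU_eq := hU.eq_of_le_s3 (le_count_iff_replicate_le.mp h.le)
    (by rw [← card_pos, card_replicate]; exact hn) (by simp [addOrderOf_nsmul_eq_zero])
  simp [← hU_eq] at h

theorem exists_isFactorization_add_replicate_neg {g : G} {a m : ℕ} {S : Multiset G}
    (hU : IsMinZeroSum (replicate a g + S)) (ha : 0 < a) (hS : -g ∉ S)
    (hm : (a + m) • g = 0) :
    ∃ z, IsFactorization (S + replicate m (-g)) z ∧ card z ≤ m := by
  have hSsum : S.sum = m • g := by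
    have h := hU.2.1
    rw [sum_add, sum_replicate] at h
    rw [add_nsmul] at hm
    exact add_left_cancel (h.trans hm.symm)
  obtain ⟨z, hz⟩ := exists_isFactorization (A := S + replicate m (-g)) (by simp [hSsum])
  refine ⟨z, hz, ?_⟩
  have hSU : S < replicate a g + S :=
    lt_add_of_pos_left S (pos_iff_ne_zero.mpr (by simpa [← card_pos] using ha))
  have hmem : ∀ W ∈ z, 1 ≤ count (-g) W := by
    intro W hW
    rw [Nat.one_le_iff_ne_zero, Ne, count_eq_zero, not_not]
    by_contra hgW
    have hWS : W ≤ S := le_iff_count.mpr fun x => by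
      have := count_le_of_le x (hz.2 ▸ le_sum_of_mem hW)
      by_cases hx : x = -g
      · simp [hx, hgW]
      · simpa [count_replicate, Ne.symm hx] using this
    exact (hWS.trans_lt hSU).ne (hU.eq_of_le_s3 (hWS.trans hSU.le) (hz.1 W hW).1 (hz.1 W hW).2.1)
  simpa [hz.2, count_replicate, hS] using card_le_addMonoidHom_sum (countAddMonoidHom (-g)) hmem

theorem exists_isFactorization_pair_mem_card_le {g : G} (hg : g ≠ 0) {a b : ℕ} {S T : Multiset G}
    (hU : IsMinZeroSum (replicate a g + S)) (hV : IsMinZeroSum (replicate b (-g) + T))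
    (hS : -g ∉ S) (hT : g ∉ T) (ha : a ≤ addOrderOf g) (hb : b ≤ addOrderOf g)
    (hab : addOrderOf g < a + b) :
    ∃ Z, IsFactorization (replicate a g + S + (replicate b (-g) + T)) Z ∧
      {g, -g} ∈ Z ∧ card Z ≤ addOrderOf g := by
  set n := addOrderOf g
  set s := a + b - n
  obtain ⟨z₁, hz₁, hcard₁⟩ := exists_isFactorization_add_replicate_neg (m := n - a) hU
    (by omega) hS (by rw [Nat.add_sub_cancel' ha]; exact addOrderOf_nsmul_eq_zero g)
  obtain ⟨z₂, hz₂, hcard₂⟩ := exists_isFactorization_add_replicate_neg (m := n - b) hV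
    (by omega) (by rwa [neg_neg])
    (by rw [Nat.add_sub_cancel' hb, smul_neg, addOrderOf_nsmul_eq_zero, neg_zero])
  rw [neg_neg] at hz₂
  have hpairs : IsFactorization (replicate s g + replicate s (-g)) (replicate s {g, -g}) :=
    ⟨fun W hW => eq_of_mem_replicate hW ▸ isMinZeroSum_pair hg, by
      rw [sum_replicate, insert_eq_cons, ← singleton_add, nsmul_add, nsmul_singleton,
        nsmul_singleton]⟩
  have hsplit : replicate a g + S + (replicate b (-g) + T) =
      replicate s g + replicate s (-g) + (S + replicate (n - a) (-g)) +
        (T + replicate (n - b) g) := by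
    have ha' : replicate a g = replicate s g + replicate (n - b) g := by
      rw [← replicate_add]; congr 1; omega
    have hb' : replicate b (-g) = replicate s (-g) + replicate (n - a) (-g) := by
      rw [← replicate_add]; congr 1; omega
    rw [ha', hb']
    abel
  refine ⟨replicate s {g, -g} + z₁ + z₂, hsplit ▸ (hpairs.add hz₁).add hz₂, ?_, ?_⟩
  · simp [mem_replicate]; omega
  · simp only [card_add, card_replicate]; omega

theorem exists_mem_lengthsSet_or_eq_pair_add {g : G} (hn : 2 ≤ addOrderOf g) {U V : Multiset G}
    (hU : IsMinZeroSum U) (hV : IsMinZeroSum V)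
    (hab : addOrderOf g < count g U + count (-g) V) :
    (∃ k ∈ LengthsSet (U + V), 3 ≤ k ∧ k ≤ addOrderOf g) ∨
      ∃ A, IsMinZeroSum A ∧ U + V = {g, -g} + A := by
  have hg : g ≠ 0 := by rintro rfl; simp at hn
  have ha := hU.count_le_addOrderOf_s3 g (by omega)
  have hb := hV.count_le_addOrderOf_s3 (-g) (by rw [addOrderOf_neg]; omega)
  rw [addOrderOf_neg] at hb
  have hUS := filter_add_not (· = g) U
  have hVT := filter_add_not (· = -g) V
  rw [filter_eq'] at hUS hVT
  by_cases hS : -g ∈ U.filter (¬ · = g)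
  · have hgU : g ∈ U := count_pos.mp (by omega)
    rw [mem_filter] at hS
    exact Or.inr ⟨V, hV, by rw [hU.eq_pair hgU hS.1 (Ne.symm hS.2) (add_neg_cancel g)]⟩
  by_cases hT : g ∈ V.filter (¬ · = -g)
  · have hgV : -g ∈ V := count_pos.mp (by omega)
    rw [mem_filter] at hT
    exact Or.inr ⟨U, hU, by rw [hV.eq_pair hT.1 hgV hT.2 (add_neg_cancel g), add_comm]⟩
  obtain ⟨Z, hZ, hpair, hcard⟩ :=
    exists_isFactorization_pair_mem_card_le hg (by rwa [hUS]) (by rwa [hVT]) hS hT ha hb hab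
  rw [hUS, hVT] at hZ
  by_cases h3 : 3 ≤ card Z
  · exact Or.inl ⟨card Z, ⟨Z, rfl, hZ⟩, h3, hcard⟩
  obtain ⟨Z', rfl⟩ := exists_cons_of_mem hpair
  rw [card_cons, not_le] at h3
  rcases Nat.lt_or_ge (card Z') 1 with h0 | h1
  · rw [card_eq_zero.mp (show card Z' = 0 by omega)] at hZ
    exact absurd (hZ.2 ▸ by simpa using isMinZeroSum_pair hg) (hU.not_add hV)
  · obtain ⟨A, rfl⟩ := card_eq_one.mp (show card Z' = 1 by omega)
    exact Or.inr ⟨A, hZ.1 A (by simp), by simpa using hZ.2.symm⟩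

theorem exists_mem_lengthsSet_or_forall_le_two {g : G} (hn : 0 < addOrderOf g)
    {U V : Multiset G} (hU : IsMinZeroSum U) (hV : IsMinZeroSum V)
    (hab : addOrderOf g < count g U + count (-g) V) :
    (∃ k ∈ LengthsSet (U + V), 3 ≤ k ∧ k ≤ addOrderOf g) ∨ ∀ k ∈ LengthsSet (U + V), k ≤ 2 := by
  obtain h1 | h2 := (Nat.succ_le_of_lt hn).eq_or_lt
  · right
    obtain rfl : g = 0 := AddMonoid.addOrderOf_eq_one_iff.mp h1.symm
    have ha := hU.count_le_addOrderOf_s3 0 hn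
    have hb := hV.count_le_addOrderOf_s3 0 hn
    rw [neg_zero] at hab
    rw [hU.eq_singleton_zero (count_pos.mp (by omega)),
      hV.eq_singleton_zero (count_pos.mp (by omega))]
    rintro k ⟨z, rfl, hz⟩
    simpa using IsFactorization.card_le_card hz
  · refine (exists_mem_lengthsSet_or_eq_pair_add h2 hU hV hab).imp_right ?_
    rintro ⟨A, hA, hUV⟩ k ⟨z, rfl, hz⟩
    have hg : g ≠ 0 := by rintro rfl; simp at h2
    exact card_le_two_of_isFactorization_pair_add hg hA (hUV ▸ hz)

end

theorem statement3_general {G : Type*} [AddCommGroup G] [Fintype G] [DecidableEq G]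
    (U V : Multiset G) (hU : IsMinZeroSum U) (hV : IsMinZeroSum V)
    (hmax : ∃ k ∈ LengthsSet (U + V), 3 ≤ k)
    (g : G)
    (hno : ∀ k ∈ LengthsSet (U + V), ¬ (3 ≤ k ∧ k ≤ addOrderOf g)) :
    U.count g + V.count (-g) ≤ addOrderOf g := by
  by_contra! hlt
  obtain ⟨k, hk, hk3⟩ := hmax
  rcases exists_mem_lengthsSet_or_forall_le_two (addOrderOf_pos g) hU hV hlt with
    ⟨j, hj, hj3, hjn⟩ | hle
  · exact hno j hj ⟨hj3, hjn⟩
  · exact absurd (hle k hk) (by omega)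

theorem statement3 {G : Type*} [AddCommGroup G] [Fintype G] [DecidableEq G]
    (hG : 3 ≤ Fintype.card G)
    (U V : Multiset G) (hU : IsMinZeroSum U) (hV : IsMinZeroSum V)
    (hmax : ∃ k ∈ LengthsSet (U + V), 3 ≤ k)
    (g : G)
    (hno : ∀ k ∈ LengthsSet (U + V), ¬ (3 ≤ k ∧ k ≤ addOrderOf g)) :
    U.count g + V.count (-g) ≤ addOrderOf g :=
  statement3_general U V hU hV hmax g hno
end
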